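/- arXiv:2001.11995 — 5 statements merged into one kernel-verified Lean document; each statement's English description precedes it below -/
import Mathlib

section
/- Assume (H1): for every index j, every t > 0 and all x, y ∈ [0,∞)^N with x_j = 0 and y ≠ 0, one has f_j(t,x,y) > 0. Then every solution x of the delay differential equation whose initial segment is strictly positive (i.e. x_j(t) > 0 for every coordinate j and every t ∈ [−τ, 0]) remains strictly positive for all time: x_j(t) > 0 for every coordinate j and every t > 0. -/
open Filter Set
open scoped Topology

/-- Under (H1), solutions with strictly positive initial segment
remain strictly positive for all positive times. -/
theorem positivity_of_solutions
    (N : ℕ) (hN : 1 ≤ N) (τ : ℝ) (hτ : 0 < τ)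
    (f : ℝ → EuclideanSpace ℝ (Fin N) → EuclideanSpace ℝ (Fin N) → EuclideanSpace ℝ (Fin N))
    (hf : ContinuousOn
      (fun p : ℝ × EuclideanSpace ℝ (Fin N) × EuclideanSpace ℝ (Fin N) => f p.1 p.2.1 p.2.2)
      {p | 0 ≤ p.1 ∧ (∀ j, 0 ≤ p.2.1 j) ∧ (∀ j, 0 ≤ p.2.2 j)})
    -- (H1)
    (hH1 : ∀ (j : Fin N) (t : ℝ), 0 < t →
      ∀ u v : EuclideanSpace ℝ (Fin N), (∀ i, 0 ≤ u i) → (∀ i, 0 ≤ v i) →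
        u j = 0 → v ≠ 0 → 0 < f t u v j)
    -- x is a solution
    (x : ℝ → EuclideanSpace ℝ (Fin N))
    (hxc : ContinuousOn x (Ici (-τ)))
    (hxnn : ∀ t, -τ ≤ t → ∀ j, 0 ≤ x t j)
    (hxde : ∀ t, 0 < t → HasDerivAt x (f t (x t) (x (t - τ))) t)
    -- strictly positive initial segment
    (hinit : ∀ t ∈ Icc (-τ) (0 : ℝ), ∀ j, 0 < x t j) :
    ∀ t, 0 < t → ∀ j, 0 < x t j := by
  -- The set of nonnegative times where some coordinate vanishes
  set A : Set ℝ := {t | 0 ≤ t ∧ ∃ j, x t j = 0} with hA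
  by_cases hAe : A = ∅
  · intro t ht j
    rcases (hxnn t (le_trans (neg_nonpos.mpr hτ.le) ht.le) j).lt_or_eq with h | h
    · exact h
    · exact absurd (hA ▸ ⟨ht.le, j, h.symm⟩ : t ∈ A) (by simp [hAe])
  · exfalso
    have hAne : A.Nonempty := nonempty_iff_ne_empty.mpr hAe
    have hcoord : ∀ j : Fin N, ContinuousOn (fun t => x t j) (Ici (-τ)) := by
      intro j
      exact (EuclideanSpace.proj (𝕜 := ℝ) j).continuous.comp_continuousOn hxc
    have hsub : Ici (0:ℝ) ⊆ Ici (-τ) := Ici_subset_Ici.mpr (neg_nonpos.mpr hτ.le)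
    have hAclosed : IsClosed A := by
      have : A = ⋃ j : Fin N, (Ici (0:ℝ) ∩ (fun t => x t j) ⁻¹' {0}) := by
        ext t
        constructor
        · rintro ⟨h0, j, hj⟩
          exact mem_iUnion.mpr ⟨j, h0, hj⟩
        · intro ht
          obtain ⟨j, h0, hj⟩ := mem_iUnion.mp ht
          exact ⟨h0, j, hj⟩
      rw [this]
      refine isClosed_iUnion_of_finite fun j => ?_
      exact ((hcoord j).mono hsub).preimage_isClosed_of_isClosed isClosed_Ici
        isClosed_singleton
    have hbdd : BddBelow A := ⟨0, fun t ht => ht.1⟩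
    set t₀ := sInf A with ht₀
    have ht₀mem : t₀ ∈ A := hAclosed.csInf_mem hAne hbdd
    have ht₀nn : 0 ≤ t₀ := ht₀mem.1
    have ht₀pos : 0 < t₀ := by
      rcases ht₀nn.lt_or_eq with h | h
      · exact h
      · obtain ⟨j, hj⟩ := ht₀mem.2
        rw [← h] at hj
        exact absurd hj (hinit 0 ⟨neg_nonpos.mpr hτ.le, le_refl 0⟩ j).ne'
    -- strict positivity before t₀
    have hpos_before : ∀ t, -τ ≤ t → t < t₀ → ∀ j, 0 < x t j := by
      intro t ht1 ht2 j
      rcases le_or_gt 0 t with h0 | h0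
      · rcases (hxnn t ht1 j).lt_or_eq with h | h
        · exact h
        · exact absurd (csInf_le hbdd ⟨h0, j, h.symm⟩) (not_le.mpr ht2)
      · exact hinit t ⟨ht1, h0.le⟩ j
    obtain ⟨j, hj0⟩ := ht₀mem.2
    -- x (t₀ - τ) ≠ 0
    have hvpos : ∀ i, 0 < x (t₀ - τ) i :=
      hpos_before (t₀ - τ) (by linarith) (by linarith) 
    have hvne : x (t₀ - τ) ≠ 0 := by
      intro h
      have := hvpos ⟨0, hN⟩
      rw [h] at this
      simp at this
    have hd : 0 < f t₀ (x t₀) (x (t₀ - τ)) j :=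
      hH1 j t₀ ht₀pos _ _ (hxnn t₀ (by linarith) ) (fun i => (hvpos i).le) hj0 hvne
    -- derivative of coordinate j at t₀
    have hderiv : HasDerivAt (fun t => x t j) (f t₀ (x t₀) (x (t₀ - τ)) j) t₀ :=
      (EuclideanSpace.proj (𝕜 := ℝ) j).hasFDerivAt.comp_hasDerivAt t₀ (hxde t₀ ht₀pos)
    have hslope := hasDerivAt_iff_tendsto_slope.mp hderiv
    have hev : ∀ᶠ t in 𝓝[≠] t₀, 0 < slope (fun t => x t j) t₀ t :=
      hslope (Ioi_mem_nhds hd)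
    have hmono : 𝓝[<] t₀ ≤ 𝓝[≠] t₀ :=
      nhdsWithin_mono _ (fun t ht => ne_of_lt ht)
    have hev2 : ∀ᶠ t in 𝓝[<] t₀, 0 < slope (fun t => x t j) t₀ t := hmono hev
    have hev3 : ∀ᶠ t in 𝓝[<] t₀, t ∈ Ioo (0:ℝ) t₀ := by
      exact Ioo_mem_nhdsLT_of_mem ⟨ht₀pos, le_refl t₀⟩
    obtain ⟨t, hts, htm⟩ := (hev2.and hev3).exists
    have hslope_eq : slope (fun t => x t j) t₀ t = x t j / (t - t₀) := by
      simp [slope_def_field, hj0]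
    rw [hslope_eq] at hts
    have htneg : t - t₀ < 0 := by linarith [htm.2]
    have : x t j < 0 := by
      by_contra h
      push_neg at h
      have := div_nonpos_of_nonneg_of_nonpos h htneg.le
      linarith
    exact absurd this (not_lt.mpr (hxnn t (by linarith [htm.1]) j))
end

section
/- Assume (H6): there exists k > 0 such that ⟨∇V(x), f(t,x,y)⟩ ≥ −k·V(x) for all t > 0 and all x, y ∈ [0,∞)^N. Then every positive solution x of the delay differential equation satisfies V(x(t−τ)) ≤ e^{kτ}·V(x(t)) for all t ≥ τ. -/
open Filter Set RealInnerProductSpace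

/-!
Along a solution, the H6 bound says `d/ds V(x s) ≥ -k V(x s)`, so `s ↦ e^{ks} V(x s)` is
nondecreasing; comparing its values at `t - τ` and `t` gives the claim.
-/

theorem HasGradientAt.comp_hasDerivAt {F : Type*} [NormedAddCommGroup F] [InnerProductSpace ℝ F]
    [CompleteSpace F] {V : F → ℝ} {x : ℝ → F} {g x' : F} {s : ℝ}
    (hV : HasGradientAt V g (x s)) (hx : HasDerivAt x x' s) :
    HasDerivAt (fun u => V (x u)) ⟪g, x'⟫ s := by
  simpa [Function.comp_def] using hV.hasFDerivAt.comp_hasDerivAt s hx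

theorem le_exp_mul_mul_of_neg_mul_le_deriv {g g' : ℝ → ℝ} {k a b : ℝ} (hab : a ≤ b)
    (hg : ContinuousOn g (Icc a b)) (hderiv : ∀ s ∈ Ioo a b, HasDerivAt g (g' s) s)
    (hbound : ∀ s ∈ Ioo a b, -k * g s ≤ g' s) :
    g a ≤ Real.exp (k * (b - a)) * g b := by
  have hmono : MonotoneOn (fun s => Real.exp (k * s) * g s) (Icc a b) := by
    refine monotoneOn_of_hasDerivWithinAt_nonneg (f' := fun s => Real.exp (k * s) * (k * g s + g' s))
      (convex_Icc a b) (by fun_prop) (fun s hs => ?_) (fun s hs => ?_) <;>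
      rw [interior_Icc] at hs
    · have hexp : HasDerivAt (fun u => Real.exp (k * u)) (Real.exp (k * s) * k) s := by
        simpa using ((hasDerivAt_id s).const_mul k).exp
      exact (hexp.mul (hderiv s hs)).hasDerivWithinAt.congr_deriv (by ring)
    · have : 0 ≤ k * g s + g' s := by linarith [hbound s hs]
      positivity
  have hends := hmono ⟨le_rfl, hab⟩ ⟨hab, le_rfl⟩ hab
  calc g a = Real.exp (-(k * a)) * (Real.exp (k * a) * g a) := by
        rw [← mul_assoc, ← Real.exp_add, neg_add_cancel, Real.exp_zero, one_mul]
    _ ≤ Real.exp (-(k * a)) * (Real.exp (k * b) * g b) :=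
        mul_le_mul_of_nonneg_left hends (Real.exp_pos _).le
    _ = Real.exp (k * (b - a)) * g b := by
        rw [← mul_assoc, ← Real.exp_add, neg_add_eq_sub, ← mul_sub]

theorem delayed_value_bound_H6_general
(N : ℕ) (τ : ℝ) (hτ : 0 < τ)
    (f : ℝ → EuclideanSpace ℝ (Fin N) → EuclideanSpace ℝ (Fin N) → EuclideanSpace ℝ (Fin N))
    (V : EuclideanSpace ℝ (Fin N) → ℝ)
    (hVC1 : ContDiff ℝ 1 V)
    -- (H6)
    (k : ℝ)
    (hH6 : ∀ t, 0 < t →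
      ∀ u v : EuclideanSpace ℝ (Fin N), (∀ i, 0 ≤ u i) → (∀ i, 0 ≤ v i) →
        -k * V u ≤ ⟪gradient V u, f t u v⟫)
(x : ℝ → EuclideanSpace ℝ (Fin N))
    (hxc : ContinuousOn x (Ici (-τ)))
    (hxpos : ∀ t, -τ ≤ t → ∀ j, 0 < x t j)
    (hxde : ∀ t, 0 < t → HasDerivAt x (f t (x t) (x (t - τ))) t) :
    ∀ t, τ ≤ t → V (x (t - τ)) ≤ Real.exp (k * τ) * V (x t) := by
  intro t ht
  have hxnonneg : ∀ s, -τ ≤ s → ∀ j, 0 ≤ x s j := fun s hs j => (hxpos s hs j).le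
  have hcont : ContinuousOn (fun s => V (x s)) (Icc (t - τ) t) :=
    hVC1.continuous.comp_continuousOn (hxc.mono fun s hs => by simp only [mem_Ici]; linarith [hs.1])
  have key := le_exp_mul_mul_of_neg_mul_le_deriv (by linarith) hcont
    (fun s hs => ((hVC1.differentiable one_ne_zero _).hasGradientAt).comp_hasDerivAt
      (hxde s (by linarith [hs.1])))
    (fun s hs => hH6 s (by linarith [hs.1]) _ _ (hxnonneg s (by linarith [hs.1]))
      (hxnonneg (s - τ) (by linarith [hs.1])))
  rwa [sub_sub_cancel] at key

/-- under (H6) with constant k, every positive solution satisfies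
V(x(t−τ)) ≤ e^{kτ}·V(x(t)) for all t ≥ τ. -/
theorem delayed_value_bound_H6
(N : ℕ) (hN : 1 ≤ N) (τ : ℝ) (hτ : 0 < τ)
    (f : ℝ → EuclideanSpace ℝ (Fin N) → EuclideanSpace ℝ (Fin N) → EuclideanSpace ℝ (Fin N))
    (hf : ContinuousOn
      (fun p : ℝ × EuclideanSpace ℝ (Fin N) × EuclideanSpace ℝ (Fin N) => f p.1 p.2.1 p.2.2)
      {p | 0 ≤ p.1 ∧ (∀ j, 0 ≤ p.2.1 j) ∧ (∀ j, 0 ≤ p.2.2 j)})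
    (V : EuclideanSpace ℝ (Fin N) → ℝ)
    (hVC1 : ContDiff ℝ 1 V) (hV0 : V 0 = 0) (hVnn : ∀ u, 0 ≤ V u)
    (hVpos : ∀ u : EuclideanSpace ℝ (Fin N), (∀ i, 0 ≤ u i) → u ≠ 0 → 0 < V u)
    (hVtend : Tendsto V (nhds 0) (nhds 0))
    -- (H6)
    (k : ℝ) (hk : 0 < k)
    (hH6 : ∀ t, 0 < t →
      ∀ u v : EuclideanSpace ℝ (Fin N), (∀ i, 0 ≤ u i) → (∀ i, 0 ≤ v i) →
        -k * V u ≤ ⟪gradient V u, f t u v⟫)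
(x : ℝ → EuclideanSpace ℝ (Fin N))
    (hxc : ContinuousOn x (Ici (-τ)))
    (hxpos : ∀ t, -τ ≤ t → ∀ j, 0 < x t j)
    (hxde : ∀ t, 0 < t → HasDerivAt x (f t (x t) (x (t - τ))) t) :
    ∀ t, τ ≤ t → V (x (t - τ)) ≤ Real.exp (k * τ) * V (x t) :=
  delayed_value_bound_H6_general N τ hτ f V hVC1 k hH6 x hxc hxpos hxde
end

section
/- Suppose f(t+T, x, y) = f(t, x, y) for all t ∈ ℝ and all x, y, and let x : ℝ → [0,∞)^N be a continuous T-periodic function which is a fixed point of K, i.e. Kx(t) = x(t) for all t ∈ ℝ. Then (1/T)·∫₀^T f(s, x(s), x(s−τ)) ds = 0 and x is differentiable with x'(t) = f(t, x(t), x(t−τ)) for all t ∈ ℝ; in particular, x is a T-periodic solution of the delay differential equation x'(t) = f(t, x(t), x(t−τ)). -/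
/-!
With `F` the primitive `t ↦ ∫₀ᵗ 𝒩x`, the fixed-point equation says that `x - F` is the affine
map `t ↦ (x̄ - F̄) - t • (𝒩x)‾`. Averaging it over `[0, T]` gives `x̄ - F̄` on the left and
`x̄ - F̄ - (T / 2) • (𝒩x)‾` on the right, so `(𝒩x)‾ = 0`. Then `x = F + const`, and the
fundamental theorem of calculus gives `x' = 𝒩x`.
-/

open Filter Set intervalIntegral

/-- The Nemitskii operator 𝒩x(t) = f(t, x(t), x(t−τ)). -/
noncomputable def Nem (N : ℕ) (τ : ℝ)
    (f : ℝ → EuclideanSpace ℝ (Fin N) → EuclideanSpace ℝ (Fin N) → EuclideanSpace ℝ (Fin N))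
    (x : ℝ → EuclideanSpace ℝ (Fin N)) (t : ℝ) : EuclideanSpace ℝ (Fin N) :=
  f t (x t) (x (t - τ))

/-- The mean value (1/T)·∫₀ᵀ y(s) ds. -/
noncomputable def meanT (N : ℕ) (T : ℝ)
    (y : ℝ → EuclideanSpace ℝ (Fin N)) : EuclideanSpace ℝ (Fin N) :=
  T⁻¹ • ∫ s in (0:ℝ)..T, y s

/-- The operator Kx(t) = x̄ − t·(𝒩x)‾ + (ℐ𝒩x)(t) − (1/T)·∫₀ᵀ (ℐ𝒩x)(s) ds. -/
noncomputable def Kop (N : ℕ) (τ T : ℝ)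
    (f : ℝ → EuclideanSpace ℝ (Fin N) → EuclideanSpace ℝ (Fin N) → EuclideanSpace ℝ (Fin N))
    (x : ℝ → EuclideanSpace ℝ (Fin N)) (t : ℝ) : EuclideanSpace ℝ (Fin N) :=
  meanT N T x - t • meanT N T (Nem N τ f x)
    + (∫ s in (0:ℝ)..t, Nem N τ f x s)
    - meanT N T (fun s => ∫ u in (0:ℝ)..s, Nem N τ f x u)

theorem eq_zero_of_integral_sub_smul_eq {E : Type*} [NormedAddCommGroup E] [NormedSpace ℝ E]
    [CompleteSpace E] {T : ℝ} (hT : T ≠ 0) {b m : E}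
    (h : ∫ t in (0:ℝ)..T, (b - t • m) = T • b) : m = 0 := by
  have hint : ∫ t in (0:ℝ)..T, (b - t • m) = T • b - (T ^ 2 / 2) • m := by
    rw [integral_sub (g := fun t : ℝ => t • m) intervalIntegrable_const
      ((continuous_id.smul continuous_const).intervalIntegrable _ _),
      intervalIntegral.integral_const, intervalIntegral.integral_smul_const, integral_id]
    simp
  rw [hint, sub_eq_self, smul_eq_zero] at h
  exact h.resolve_left (by positivity)

theorem integral_eq_smul_meanT {N : ℕ} {T : ℝ} (hT : T ≠ 0) (y : ℝ → EuclideanSpace ℝ (Fin N)) :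
    ∫ s in (0:ℝ)..T, y s = T • meanT N T y := by
  rw [meanT, smul_smul, mul_inv_cancel₀ hT, one_smul]

theorem continuous_Nem {N : ℕ} {τ : ℝ}
    {f : ℝ → EuclideanSpace ℝ (Fin N) → EuclideanSpace ℝ (Fin N) → EuclideanSpace ℝ (Fin N)}
    (hf : ContinuousOn
      (fun p : ℝ × EuclideanSpace ℝ (Fin N) × EuclideanSpace ℝ (Fin N) => f p.1 p.2.1 p.2.2)
      {p | (∀ j, 0 ≤ p.2.1 j) ∧ (∀ j, 0 ≤ p.2.2 j)})
    {x : ℝ → EuclideanSpace ℝ (Fin N)} (hxc : Continuous x) (hxnn : ∀ t, ∀ j, 0 ≤ x t j) :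
    Continuous (Nem N τ f x) :=
  hf.comp_continuous (continuous_id.prodMk (hxc.prodMk (hxc.comp (continuous_sub_right τ))))
    fun t => ⟨hxnn t, hxnn (t - τ)⟩

theorem Kop_fixed_point_is_solution_general
(N : ℕ) (τ : ℝ) (T : ℝ) (hT : 0 < T)
    (f : ℝ → EuclideanSpace ℝ (Fin N) → EuclideanSpace ℝ (Fin N) → EuclideanSpace ℝ (Fin N))
    (hf : ContinuousOn
      (fun p : ℝ × EuclideanSpace ℝ (Fin N) × EuclideanSpace ℝ (Fin N) => f p.1 p.2.1 p.2.2)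
      {p | (∀ j, 0 ≤ p.2.1 j) ∧ (∀ j, 0 ≤ p.2.2 j)})
    (x : ℝ → EuclideanSpace ℝ (Fin N))
    (hxc : Continuous x)
    (hxnn : ∀ t, ∀ j, 0 ≤ x t j)
    (hfix : ∀ t, Kop N τ T f x t = x t) :
    meanT N T (Nem N τ f x) = 0 ∧
      ∀ t : ℝ, HasDerivAt x (f t (x t) (x (t - τ))) t := by
  have hg : Continuous (Nem N τ f x) := continuous_Nem hf hxc hxnn
  let F : ℝ → EuclideanSpace ℝ (Fin N) := fun t => ∫ s in (0:ℝ)..t, Nem N τ f x s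
  have hF : ∀ t, HasDerivAt F (Nem N τ f x t) t := fun t =>
    (hg.integral_hasStrictDerivAt 0 t).hasDerivAt
  have hFc : Continuous F := continuous_iff_continuousAt.2 fun t => (hF t).continuousAt
  let b := meanT N T x - meanT N T F
  have hxF : ∀ t, x t - F t = b - t • meanT N T (Nem N τ f x) := fun t => by
    rw [← hfix t, Kop]
    simp only [F, b]
    abel
  have hm : meanT N T (Nem N τ f x) = 0 := by
    refine eq_zero_of_integral_sub_smul_eq (b := b) hT.ne' ?_
    rw [← integral_congr fun t _ => hxF t,
      integral_sub (hxc.intervalIntegrable _ _) (hFc.intervalIntegrable _ _),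
      integral_eq_smul_meanT hT.ne', integral_eq_smul_meanT hT.ne', smul_sub]
  refine ⟨hm, fun t => ?_⟩
  have hx : ∀ s, x s = F s + b := fun s => by
    rw [← sub_eq_iff_eq_add', hxF, hm, smul_zero, sub_zero]
  exact ((hF t).add_const b).congr_of_eventuallyEq (.of_forall hx)

/-- a fixed point of K has vanishing mean of the Nemitskii operator
and is a T-periodic solution of the delay differential equation. -/
theorem Kop_fixed_point_is_solution
(N : ℕ) (hN : 1 ≤ N) (τ : ℝ) (hτ : 0 < τ) (T : ℝ) (hT : 0 < T)
    (f : ℝ → EuclideanSpace ℝ (Fin N) → EuclideanSpace ℝ (Fin N) → EuclideanSpace ℝ (Fin N))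
    (hf : ContinuousOn
      (fun p : ℝ × EuclideanSpace ℝ (Fin N) × EuclideanSpace ℝ (Fin N) => f p.1 p.2.1 p.2.2)
      {p | (∀ j, 0 ≤ p.2.1 j) ∧ (∀ j, 0 ≤ p.2.2 j)})
    (hfper : ∀ (t : ℝ) (u v : EuclideanSpace ℝ (Fin N)), f (t + T) u v = f t u v)
    (x : ℝ → EuclideanSpace ℝ (Fin N))
    (hxc : Continuous x)
    (hxnn : ∀ t, ∀ j, 0 ≤ x t j)
    (hxper : ∀ t, x (t + T) = x t)
    (hfix : ∀ t, Kop N τ T f x t = x t) :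
    meanT N T (Nem N τ f x) = 0 ∧
      ∀ t : ℝ, HasDerivAt x (f t (x t) (x (t - τ))) t :=
  Kop_fixed_point_is_solution_general N τ T hT f hf x hxc hxnn hfix
end

section
/- Suppose f(t+T, x, y) = f(t, x, y) for all t ∈ ℝ and all x, y. Fix λ ∈ (0, 1] and let x : ℝ → [0,∞)^N be a continuous T-periodic function which is a fixed point of the homotopy operator K_λ := λ·K + (1−λ)·K₀, i.e. λ·Kx(t) + (1−λ)·K₀x = x(t) for all t ∈ ℝ. Then (𝒩x)‾ = 0 and x is differentiable with x'(t) = λ·f(t, x(t), x(t−τ)) for all t ∈ ℝ. -/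
open Filter Set intervalIntegral

/-- The operator K₀x = x̄ − (T/2)·(𝒩x)‾ (a constant of ℝᴺ). -/
noncomputable def K0op (N : ℕ) (τ T : ℝ)
    (f : ℝ → EuclideanSpace ℝ (Fin N) → EuclideanSpace ℝ (Fin N) → EuclideanSpace ℝ (Fin N))
    (x : ℝ → EuclideanSpace ℝ (Fin N)) : EuclideanSpace ℝ (Fin N) :=
  meanT N T x - (T / 2) • meanT N T (Nem N τ f x)

/-- a fixed point of the homotopy K_λ = λ·K + (1−λ)·K₀ with λ ∈ (0,1]
has vanishing Nemitskii mean and solves x' = λ·f(t, x(t), x(t−τ)). -/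
theorem Kop_homotopy_fixed_point
(N : ℕ) (hN : 1 ≤ N) (τ : ℝ) (hτ : 0 < τ) (T : ℝ) (hT : 0 < T)
    (f : ℝ → EuclideanSpace ℝ (Fin N) → EuclideanSpace ℝ (Fin N) → EuclideanSpace ℝ (Fin N))
    (hf : ContinuousOn
      (fun p : ℝ × EuclideanSpace ℝ (Fin N) × EuclideanSpace ℝ (Fin N) => f p.1 p.2.1 p.2.2)
      {p | (∀ j, 0 ≤ p.2.1 j) ∧ (∀ j, 0 ≤ p.2.2 j)})
    (hfper : ∀ (t : ℝ) (u v : EuclideanSpace ℝ (Fin N)), f (t + T) u v = f t u v)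
    (x : ℝ → EuclideanSpace ℝ (Fin N))
    (hxc : Continuous x)
    (hxnn : ∀ t, ∀ j, 0 ≤ x t j)
    (hxper : ∀ t, x (t + T) = x t)
    (lam : ℝ) (hlam0 : 0 < lam) (hlam1 : lam ≤ 1)
    (hfix : ∀ t, lam • Kop N τ T f x t + (1 - lam) • K0op N τ T f x = x t) :
    meanT N T (Nem N τ f x) = 0 ∧
      ∀ t : ℝ, HasDerivAt x (lam • f t (x t) (x (t - τ))) t := by
  have hTne : T ≠ 0 := ne_of_gt hT
  set g : ℝ → EuclideanSpace ℝ (Fin N) := Nem N τ f x with hg_def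
  have hgc : Continuous g := by
    have hmap : Continuous fun t : ℝ => (t, x t, x (t - τ)) := by fun_prop
    exact hf.comp_continuous hmap (fun t => ⟨fun j => hxnn _ j, fun j => hxnn _ j⟩)
  set m : EuclideanSpace ℝ (Fin N) := meanT N T g with hm_def
  set F : ℝ → EuclideanSpace ℝ (Fin N) := fun t => ∫ s in (0:ℝ)..t, g s with hF_def
  have hFc : Continuous F :=
    intervalIntegral.continuous_primitive (fun a b => hgc.intervalIntegrable a b) 0
  set c : EuclideanSpace ℝ (Fin N) := meanT N T F with hc_def
  set xb : EuclideanSpace ℝ (Fin N) := meanT N T x with hxb_def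
  have hKop : ∀ t, Kop N τ T f x t = xb - t • m + F t - c := fun t => rfl
  have hK0 : K0op N τ T f x = xb - (T / 2) • m := rfl
  have hunsmul : ∀ (y : ℝ → EuclideanSpace ℝ (Fin N)),
      (∫ s in (0:ℝ)..T, y s) = T • meanT N T y := by
    intro y
    rw [meanT, smul_smul, mul_inv_cancel₀ hTne, one_smul]
  -- integrate hfix over [0,T]
  have hintKop : (∫ t in (0:ℝ)..T, Kop N τ T f x t) = T • xb - (T^2/2) • m := by
    have h1 : (∫ t in (0:ℝ)..T, Kop N τ T f x t)
        = (∫ t in (0:ℝ)..T, (xb - t • m + F t - c)) := by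
      apply intervalIntegral.integral_congr; intro t _; exact hKop t
    rw [h1]
    have hint1 : IntervalIntegrable (fun t : ℝ => xb - t • m) MeasureTheory.volume 0 T := by
      apply Continuous.intervalIntegrable; fun_prop
    have hint2 : IntervalIntegrable (fun t : ℝ => xb - t • m + F t) MeasureTheory.volume 0 T := by
      apply Continuous.intervalIntegrable
      exact Continuous.add (by fun_prop) hFc
    have hint3 : IntervalIntegrable F MeasureTheory.volume 0 T := hFc.intervalIntegrable _ _
    have hint4 : IntervalIntegrable (fun _ : ℝ => c) MeasureTheory.volume 0 T :=
      intervalIntegrable_const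
    rw [intervalIntegral.integral_sub hint2 hint4,
        intervalIntegral.integral_add hint1 hint3,
        intervalIntegral.integral_sub (intervalIntegrable_const) (by apply Continuous.intervalIntegrable; fun_prop),
        intervalIntegral.integral_const, intervalIntegral.integral_smul_const,
        integral_id, intervalIntegral.integral_const, hunsmul F, ← hc_def]
    module
  have hmean : T • xb - (T^2/2) • m = T • xb := by
    have h := hunsmul x
    have hL : (∫ t in (0:ℝ)..T, (lam • Kop N τ T f x t + (1 - lam) • K0op N τ T f x))
        = ∫ t in (0:ℝ)..T, x t := by
      apply intervalIntegral.integral_congr; intro t _; exact hfix t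
    have hKopInt : IntervalIntegrable (Kop N τ T f x) MeasureTheory.volume 0 T := by
      apply Continuous.intervalIntegrable
      have : Continuous fun t : ℝ => xb - t • m + F t - c := by
        exact ((continuous_const.sub (by fun_prop)).add hFc).sub continuous_const
      exact this.congr (fun t => (hKop t).symm)
    have hi1 : IntervalIntegrable (fun t => lam • Kop N τ T f x t) MeasureTheory.volume 0 T :=
      hKopInt.smul lam
    rw [intervalIntegral.integral_add hi1 intervalIntegrable_const,
        intervalIntegral.integral_smul, intervalIntegral.integral_const, hintKop,
        hunsmul x, ← hxb_def, hK0] at hL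
    have hl : lam • (T • xb - (T^2/2) • m) + (T - 0) • (1 - lam) • (xb - (T/2) • m)
        = T • xb := hL
    have hexp : lam • (T • xb - (T^2/2) • m) + (T - 0) • (1 - lam) • (xb - (T/2) • m)
        = T • xb - (T^2/2) • m := by
      module
    rw [hexp] at hl
    rw [hl]
  have hm0 : m = 0 := by
    have : (T^2/2) • m = 0 := sub_eq_self.mp hmean
    have hne : (T^2/2) ≠ 0 := by positivity
    exact (smul_eq_zero.mp this).resolve_left hne
  refine ⟨hm0, ?_⟩
  intro t
  have hxeq : ∀ s : ℝ, x s = lam • F s + (lam • (xb - c) + (1 - lam) • (xb - (T/2) • m)) := by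
    intro s
    rw [← hfix s, hKop s, hK0, hm0]
    module
  have hFd : HasDerivAt F (g t) t := (hgc.integral_hasStrictDerivAt 0 t).hasDerivAt
  have hd : HasDerivAt (fun s => lam • F s + (lam • (xb - c) + (1 - lam) • (xb - (T/2) • m)))
      (lam • g t) t := (hFd.const_smul lam).add_const _
  have hfun : (fun s => lam • F s + (lam • (xb - c) + (1 - lam) • (xb - (T/2) • m))) = x :=
    funext fun s => (hxeq s).symm
  rw [hfun] at hd
  exact hd
end

section
/- (Nicholson's equation with p ≤ d: the origin is a global attractor.) Let d ≥ p > 0 and τ > 0, and let x : [−τ,∞) → [0,∞) be a continuous function, differentiable on (0,∞), satisfying x'(t) = −d·x(t) + p·x(t−τ)·e^{−x(t−τ)} for all t > 0. Then x(t) → 0 as t → +∞. -/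
/-!
The production term is controlled by `y e^{-y} ≤ e^{-1}` and, for `0 ≤ y ≤ M`, by
`y e^{-y} ≤ y/(1+y) ≤ M/(1+M)`. A solution of `x' = -d x + N` with `N` eventually `≤ B` is
eventually `≤ K` as soon as `B < d K`: wherever `x ≥ K` it decreases at rate at least `d K - B`.
The first bound therefore makes `x` bounded. If `L = limsup x` were positive, then eventually
`x(t - τ) ≤ L + ε`, and since `p L/(1+L) < p L ≤ d L`, for small `ε` the second bound drives `x`
eventually below `L - ε`, which contradicts the definition of `L`.
-/

open Filter Set

open Real in
theorem mul_exp_neg_le_div_one_add {y : ℝ} (hy : 0 ≤ y) : y * exp (-y) ≤ y / (1 + y) := by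
  rw [exp_neg, ← div_eq_mul_inv]
  exact div_le_div_of_nonneg_left hy (by positivity) (by linarith [add_one_le_exp y])

theorem div_one_add_le_div_one_add {y M : ℝ} (hy : 0 ≤ y) (hyM : y ≤ M) :
    y / (1 + y) ≤ M / (1 + M) := by
  rw [div_le_div_iff₀ (by positivity) (by linarith)]
  linarith

theorem eventually_le_of_hasDerivAt_le_neg {f f' : ℝ → ℝ} {K c : ℝ}
    (hf : ∀ᶠ t in atTop, HasDerivAt f (f' t) t) (hbdd : IsBoundedUnder (· ≥ ·) atTop f)
    (hc : 0 < c) (hK : ∀ᶠ t in atTop, K ≤ f t → f' t ≤ -c) :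
    ∀ᶠ t in atTop, f t ≤ K := by
  obtain ⟨a, ha⟩ := eventually_atTop.1 (hf.and hK)
  have hf' (s b : ℝ) (hs : a ≤ s) : ∀ t ∈ Ico s b, HasDerivWithinAt f (f' t) (Ici t) t :=
    fun t ht => (ha t (hs.trans ht.1)).1.hasDerivWithinAt
  have hcont (s b : ℝ) (hs : a ≤ s) : ContinuousOn f (Icc s b) :=
    fun t ht => (ha t (hs.trans ht.1)).1.continuousAt.continuousWithinAt
  -- Were `f` above `K` on all of `[a, ∞)`, it would decrease linearly there.
  obtain ⟨s, hs, hfs⟩ : ∃ s, a ≤ s ∧ f s ≤ K := by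
    by_contra! hgt
    have hlin : ∀ t, a ≤ t → f t ≤ f a - c * (t - a) := fun t ht =>
      image_le_of_deriv_right_le_deriv_boundary (hcont a t le_rfl) (hf' a t le_rfl)
        (by simp) (by fun_prop) (fun u _ => ((hasDerivAt_id u).sub_const a |>.const_mul c
          |>.const_sub (f a)).hasDerivWithinAt)
        (fun u hu => by simpa using (ha u hu.1).2 (hgt u hu.1).le) ⟨ht, le_rfl⟩
    refine not_isBoundedUnder_of_tendsto_atBot ?_ hbdd
    refine tendsto_atBot_mono' atTop (eventually_ge_atTop a |>.mono hlin) ?_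
    exact tendsto_atBot_add_const_left _ _ <| tendsto_neg_atTop_atBot.comp <|
      (tendsto_atTop_add_const_right _ (-a) tendsto_id).const_mul_atTop hc
  -- Since `f' < 0` wherever `f = K`, the graph of `f` cannot cross the level `K` upwards.
  filter_upwards [eventually_ge_atTop s] with t ht
  exact image_le_of_deriv_right_lt_deriv_boundary (hcont s t hs) (hf' s t hs) hfs
    (fun _ => hasDerivAt_const _ K) (fun u hu hu' => by
      simpa using ((ha u (hs.trans hu.1)).2 hu'.ge).trans_lt (neg_lt_zero.2 hc))
    ⟨ht, le_rfl⟩ (B' := 0)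

theorem eventually_le_of_hasDerivAt_neg_mul_add {f N : ℝ → ℝ} {d B K : ℝ} (hd : 0 ≤ d)
    (hf : ∀ᶠ t in atTop, HasDerivAt f (-d * f t + N t) t)
    (hbdd : IsBoundedUnder (· ≥ ·) atTop f) (hN : ∀ᶠ t in atTop, N t ≤ B) (hBK : B < d * K) :
    ∀ᶠ t in atTop, f t ≤ K := by
  refine eventually_le_of_hasDerivAt_le_neg hf hbdd (sub_pos.2 hBK) ?_
  filter_upwards [hN] with t hNt hKt
  nlinarith [mul_le_mul_of_nonneg_left hKt hd]

section Nicholson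

open Real

variable {d p τ : ℝ} {x : ℝ → ℝ} (hxnn : ∀ t, -τ ≤ t → 0 ≤ x t)
include hxnn

theorem nicholson_production_eventually_le (hp : 0 ≤ p) {M : ℝ} (hM : ∀ᶠ t in atTop, x t ≤ M) :
    ∀ᶠ t in atTop, p * x (t - τ) * exp (-(x (t - τ))) ≤ p * (M / (1 + M)) := by
  have hMτ : ∀ᶠ t in atTop, x (t - τ) ≤ M :=
    (tendsto_atTop_add_const_right _ (-τ) tendsto_id).eventually hM
  filter_upwards [hMτ, eventually_ge_atTop 0] with t hxM ht
  have hx0 : 0 ≤ x (t - τ) := hxnn _ (by linarith)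
  rw [mul_assoc]
  exact mul_le_mul_of_nonneg_left
    ((mul_exp_neg_le_div_one_add hx0).trans (div_one_add_le_div_one_add hx0 hxM)) hp

variable (hxde : ∀ t, 0 < t → HasDerivAt x (-d * x t + p * x (t - τ) * exp (-(x (t - τ)))) t)
include hxde

theorem nicholson_eventually_le (hd : 0 ≤ d) {B K : ℝ}
    (hB : ∀ᶠ t in atTop, p * x (t - τ) * exp (-(x (t - τ))) ≤ B) (hBK : B < d * K) :
    ∀ᶠ t in atTop, x t ≤ K :=
  eventually_le_of_hasDerivAt_neg_mul_add hd ((eventually_gt_atTop 0).mono hxde)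
    (isBoundedUnder_of_eventually_ge ((eventually_ge_atTop (-τ)).mono hxnn)) hB hBK

theorem nicholson_isBoundedUnder (hd : 0 < d) (hp : 0 < p) : IsBoundedUnder (· ≤ ·) atTop x := by
  refine isBoundedUnder_of_eventually_le (nicholson_eventually_le hxnn hxde hd.le
    (Eventually.of_forall fun t => ?_) (B := p * exp (-1)) (K := p / d) ?_)
  · rw [mul_assoc]
    exact mul_le_mul_of_nonneg_left (mul_exp_neg_le_exp_neg_one _) hp.le
  · rw [mul_div_cancel₀ _ hd.ne']
    exact mul_lt_of_lt_one_right hp (exp_lt_one_iff.2 (by norm_num))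

theorem nicholson_limsup_nonpos (hp : 0 < p) (hpd : p ≤ d) : limsup x atTop ≤ 0 := by
  have hd : 0 < d := hp.trans_le hpd
  have hbdd := nicholson_isBoundedUnder hxnn hxde hd hp
  by_contra! hL
  set L := limsup x atTop
  obtain ⟨ε, hεL, hε⟩ : ∃ ε, p * ((L + ε) / (1 + (L + ε))) < d * (L - ε) ∧ 0 < ε := by
    have h0 : p * (L / (1 + L)) < d * L := calc
      p * (L / (1 + L)) < p * L := mul_lt_mul_of_pos_left (div_lt_self hL (by linarith)) hp
      _ ≤ d * L := mul_le_mul_of_nonneg_right hpd hL.le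
    have hnear : ∀ᶠ e in nhds 0, p * ((L + e) / (1 + (L + e))) < d * (L - e) :=
      ContinuousAt.eventually_lt (by fun_prop (disch := simp; linarith)) (by fun_prop)
        (by simpa using h0)
    exact ((hnear.filter_mono nhdsWithin_le_nhds).and (self_mem_nhdsWithin (s := Ioi 0))).exists
  have hxL : ∀ᶠ t in atTop, x t ≤ L + ε :=
    (eventually_lt_of_limsup_lt (by linarith) hbdd).mono fun _ => le_of_lt
  have hle := nicholson_eventually_le hxnn hxde hd.le
    (nicholson_production_eventually_le hxnn hp.le hxL) hεL
  have := limsup_le_of_le (isCoboundedUnder_le_of_eventually_le atTop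
    ((eventually_ge_atTop (-τ)).mono hxnn)) hle
  linarith

end Nicholson

theorem nicholson_zero_global_attractor_general
    (d p τ : ℝ) (hp : 0 < p) (hpd : p ≤ d)
    (x : ℝ → ℝ)
    (hxnn : ∀ t, -τ ≤ t → 0 ≤ x t)
    (hxde : ∀ t, 0 < t →
      HasDerivAt x (-d * x t + p * x (t - τ) * Real.exp (-(x (t - τ)))) t) :
    Tendsto x atTop (nhds 0) := by
  have hbdd := nicholson_isBoundedUnder hxnn hxde (hp.trans_le hpd) hp
  have hnn : ∀ᶠ t in atTop, 0 ≤ x t := (eventually_ge_atTop (-τ)).mono hxnn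
  exact tendsto_of_le_liminf_of_limsup_le (le_liminf_of_le hbdd.isCoboundedUnder_ge hnn)
    (nicholson_limsup_nonpos hxnn hxde hp hpd) hbdd (isBoundedUnder_of_eventually_ge hnn)

/-- Nicholson's equation with p ≤ d: the origin is a global attractor
of the nonnegative solutions. -/
theorem nicholson_zero_global_attractor
    (d p τ : ℝ) (hp : 0 < p) (hpd : p ≤ d) (hτ : 0 < τ)
    (x : ℝ → ℝ)
    (hxc : ContinuousOn x (Ici (-τ)))
    (hxnn : ∀ t, -τ ≤ t → 0 ≤ x t)
    (hxde : ∀ t, 0 < t →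
      HasDerivAt x (-d * x t + p * x (t - τ) * Real.exp (-(x (t - τ)))) t) :
    Tendsto x atTop (nhds 0) :=
  nicholson_zero_global_attractor_general d p τ hp hpd x hxnn hxde
end
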